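/- Let q be a power of 2, let 𝔽_q be the finite field with q elements, and let k ∈ 𝔽_q. Consider the homogeneous polynomial G_k = x²(x^q y − x y^q) + y²(y^q z − y z^q) + (z² + k xy)(z^q x − z x^q) ∈ 𝔽_q[x,y,z], which vanishes at every 𝔽_q-point of ℙ². Then the curve D_k = {G_k = 0} is smooth at every 𝔽_q-point of ℙ² (i.e., there is no nonzero triple (a,b,c) ∈ 𝔽_q³ at which G_k and all three partial derivatives ∂G_k/∂x, ∂G_k/∂y, ∂G_k/∂z vanish simultaneously) if and only if the polynomial t⁷ + k t⁵ + 1 has no zeros in 𝔽_q. -/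

import Mathlib

open MvPolynomial

/-!
At an `𝔽_q`-point the identity `x ^ q = x` makes `G_k` vanish and, since `q = 2 = 0` in `𝔽_q`,
collapses its gradient to `(a²b + c³ + kabc, a³ + b²c, b³ + ac² + ka²b)`. A root `t` of
`t⁷ + k t⁵ + 1` gives the singular point `(t² : t³ : 1)`. Conversely, at a singular point
`a ≠ 0` (as `a = 0` forces `c = 0` and then `b = 0`), and eliminating `c` from the three
equations shows that `b / a` is a root.
-/

/-- The plane-filling polynomial (for even `q`)
`G_k = x²(x^q y − x y^q) + y²(y^q z − y z^q) + (z² + k xy)(z^q x − z x^q)`. -/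
noncomputable def planeFillingPolyEven {F : Type*} [Field F] (q : ℕ) (k : F) :
    MvPolynomial (Fin 3) F :=
  X 0 ^ 2 * (X 0 ^ q * X 1 - X 0 * X 1 ^ q)
    + X 1 ^ 2 * (X 1 ^ q * X 2 - X 1 * X 2 ^ q)
    + (X 2 ^ 2 + C k * X 0 * X 1) * (X 2 ^ q * X 0 - X 2 * X 0 ^ q)

section Evaluation

variable {F : Type*} [Field F] {q : ℕ} (k : F) {a b c : F}

theorem eval_planeFillingPolyEven_eq_zero (ha : a ^ q = a) (hb : b ^ q = b) (hc : c ^ q = c) :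
    eval ![a, b, c] (planeFillingPolyEven q k) = 0 := by
  simp [planeFillingPolyEven, ha, hb, hc]

variable [CharP F 2] (hq : (q : F) = 0)
include hq

theorem eval_pderiv_zero_planeFillingPolyEven (ha : a ^ q = a) (hb : b ^ q = b)
    (hc : c ^ q = c) :
    eval ![a, b, c] (pderiv 0 (planeFillingPolyEven q k)) = a ^ 2 * b + c ^ 3 + k * a * b * c := by
  simp [planeFillingPolyEven, ha, hb, hc, hq, CharTwo.sub_eq_add, CharTwo.add_self_eq_zero,
    CharTwo.two_eq_zero]
  ring

theorem eval_pderiv_one_planeFillingPolyEven (ha : a ^ q = a) (hc : c ^ q = c) :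
    eval ![a, b, c] (pderiv 1 (planeFillingPolyEven q k)) = a ^ 3 + b ^ 2 * c := by
  simp [planeFillingPolyEven, ha, hc, hq, CharTwo.sub_eq_add, CharTwo.add_self_eq_zero,
    CharTwo.two_eq_zero]
  ring

theorem eval_pderiv_two_planeFillingPolyEven (ha : a ^ q = a) (hb : b ^ q = b) :
    eval ![a, b, c] (pderiv 2 (planeFillingPolyEven q k)) = b ^ 3 + a * c ^ 2 + k * a ^ 2 * b := by
  simp [planeFillingPolyEven, ha, hb, hq, CharTwo.sub_eq_add, CharTwo.add_self_eq_zero,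
    CharTwo.two_eq_zero]
  ring

end Evaluation

section SingularSystem

theorem singular_system_of_root {R : Type*} [CommRing R] [CharP R 2] (k : R) {t : R}
    (ht : t ^ 7 + k * t ^ 5 + 1 = 0) :
    (t ^ 2) ^ 2 * t ^ 3 + 1 ^ 3 + k * t ^ 2 * t ^ 3 * 1 = 0 ∧
      (t ^ 2) ^ 3 + (t ^ 3) ^ 2 * 1 = 0 ∧
      (t ^ 3) ^ 3 + t ^ 2 * 1 ^ 2 + k * (t ^ 2) ^ 2 * t ^ 3 = 0 := by
  refine ⟨by linear_combination ht, ?_, by linear_combination t ^ 2 * ht⟩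
  linear_combination t ^ 6 * CharTwo.two_eq_zero (R := R)

variable {F : Type*} [Field F] [CharP F 2] (k : F)

theorem exists_root_of_singular_system {a b c : F} (hne : (a, b, c) ≠ (0, 0, 0))
    (h₀ : a ^ 2 * b + c ^ 3 + k * a * b * c = 0) (h₁ : a ^ 3 + b ^ 2 * c = 0)
    (h₂ : b ^ 3 + a * c ^ 2 + k * a ^ 2 * b = 0) :
    ∃ t : F, t ^ 7 + k * t ^ 5 + 1 = 0 := by
  rcases eq_or_ne a 0 with rfl | ha
  · have hc : c = 0 := by simpa using h₀
    subst hc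
    have hb : b = 0 := by simpa using h₂
    simp [hb] at hne
  · refine ⟨b / a, ?_⟩
    have hroot : a ^ 2 * (b ^ 7 + k * a ^ 2 * b ^ 5 + a ^ 7) = 0 := by
      linear_combination b ^ 6 * h₀
        - (b ^ 4 * c ^ 2 + a ^ 3 * b ^ 2 * c + a ^ 6 + k * a * b ^ 5) * h₁
        + a ^ 3 * (b ^ 4 * c ^ 2 + a ^ 3 * b ^ 2 * c + a ^ 6 + k * a * b ^ 5)
          * CharTwo.two_eq_zero (R := F)
    field_simp
    linear_combination (mul_eq_zero.mp hroot).resolve_left (pow_ne_zero 2 ha)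

end SingularSystem

/-- For `q` a power of `2`, the curve `D_k = {G_k = 0}` is smooth at every `𝔽_q`-point of
`ℙ²` if and only if `t⁷ + k t⁵ + 1` has no zeros in `𝔽_q`. -/
theorem smooth_at_Fq_points_iff_even_q {F : Type*} [Field F] [Fintype F]
    (q : ℕ) (hq : Fintype.card F = q) (hq2 : ∃ m : ℕ, q = 2 ^ m) (k : F) :
    (∀ a b c : F, (a, b, c) ≠ (0, 0, 0) →
        ¬ (eval ![a, b, c] (planeFillingPolyEven q k) = 0 ∧
           eval ![a, b, c] (pderiv 0 (planeFillingPolyEven q k)) = 0 ∧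
           eval ![a, b, c] (pderiv 1 (planeFillingPolyEven q k)) = 0 ∧
           eval ![a, b, c] (pderiv 2 (planeFillingPolyEven q k)) = 0)) ↔
      ∀ t : F, t ^ 7 + k * t ^ 5 + 1 ≠ 0 := by
  obtain ⟨m, hm⟩ := hq2
  have : CharP F 2 := charP_of_card_eq_prime_pow (hq.trans hm)
  have hq0 : (q : F) = 0 := hq ▸ FiniteField.cast_card_eq_zero F
  have hpow (x : F) : x ^ q = x := hq ▸ FiniteField.pow_card x
  simp only [eval_planeFillingPolyEven_eq_zero k (hpow _) (hpow _) (hpow _),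
    eval_pderiv_zero_planeFillingPolyEven k hq0 (hpow _) (hpow _) (hpow _),
    eval_pderiv_one_planeFillingPolyEven k hq0 (hpow _) (hpow _),
    eval_pderiv_two_planeFillingPolyEven k hq0 (hpow _) (hpow _), true_and]
  constructor
  · intro hsmooth t ht
    exact hsmooth (t ^ 2) (t ^ 3) 1 (by simp) (singular_system_of_root k ht)
  · rintro hroot a b c hne ⟨h₀, h₁, h₂⟩
    obtain ⟨t, ht⟩ := exists_root_of_singular_system k hne h₀ h₁ h₂
    exact hroot t ht
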